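/- Let Φ, h : ℝ^m → ℝ be twice continuously differentiable, set F(x, η) = Φ(x) − η·h(x), and let x* : U → ℝ^m be a continuously differentiable map on an open interval U such that ∇ₓF(x*(η), η) = 0 and H(η) := ∇ₓ²F(x*(η), η) is positive definite for every η ∈ U. Then the function η ↦ h(x*(η)) is nondecreasing on U: for all η₁ ≤ η₂ in U, h(x*(η₁)) ≤ h(x*(η₂)). -/

import Mathlib

open Filter Topology

/-!
Differentiating the critical-point identity `∇Φ(x*(η)) = η ∇h(x*(η))` in `η` gives
`H(η) x*'(η) = ∇h(x*(η))`. Hence `(h ∘ x*)'(η) = ⟪∇h(x*(η)), x*'(η)⟫ = H(η)(x*'(η), x*'(η)) ≥ 0`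
by positive definiteness, and a function with nonnegative derivative on an interval is monotone.
-/

lemma monotoneOn_of_hasDerivAt_nonneg {D : Set ℝ} (hD : Convex ℝ D) (hDo : IsOpen D)
    {f f' : ℝ → ℝ} (hf : ∀ x ∈ D, HasDerivAt f (f' x) x) (hf' : ∀ x ∈ D, 0 ≤ f' x) :
    MonotoneOn f D := by
  refine monotoneOn_of_deriv_nonneg hD (fun x hx => (hf x hx).continuousAt.continuousWithinAt)
    ?_ ?_ <;> rw [hDo.interior_eq]
  · exact fun x hx => (hf x hx).differentiableAt.differentiableWithinAt
  · exact fun x hx => (hf x hx).deriv ▸ hf' x hx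

section

variable {E : Type*} [NormedAddCommGroup E] [NormedSpace ℝ E] {Φ h : E → ℝ}

lemma fderiv_sub_const_mul {x : E} (hΦ : DifferentiableAt ℝ Φ x) (hh : DifferentiableAt ℝ h x)
    (η : ℝ) : fderiv ℝ (fun z => Φ z - η * h z) x = fderiv ℝ Φ x - η • fderiv ℝ h x := by
  rw [fderiv_fun_sub hΦ (hh.const_mul η), fderiv_const_mul hh]

lemma fderiv_fderiv_sub_const_mul (hΦ : Differentiable ℝ Φ) (hh : Differentiable ℝ h) {x : E}
    (hΦ₂ : DifferentiableAt ℝ (fderiv ℝ Φ) x) (hh₂ : DifferentiableAt ℝ (fderiv ℝ h) x) (η : ℝ) :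
    fderiv ℝ (fun y => fderiv ℝ (fun z => Φ z - η * h z) y) x
      = fderiv ℝ (fderiv ℝ Φ) x - η • fderiv ℝ (fderiv ℝ h) x := by
  simp_rw [fderiv_sub_const_mul (hΦ _) (hh _) η]
  rw [fderiv_fun_sub hΦ₂ (hh₂.fun_const_smul η), fderiv_fun_const_smul hh₂]

lemma hessian_apply_deriv_eq_fderiv {x : ℝ → E} {η : ℝ} {v : E} (hx : HasDerivAt x v η)
    (hΦ₂ : DifferentiableAt ℝ (fderiv ℝ Φ) (x η)) (hh₂ : DifferentiableAt ℝ (fderiv ℝ h) (x η))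
    (hcrit : ∀ᶠ t in 𝓝 η, fderiv ℝ Φ (x t) - t • fderiv ℝ h (x t) = 0) :
    (fderiv ℝ (fderiv ℝ Φ) (x η) - η • fderiv ℝ (fderiv ℝ h) (x η)) v = fderiv ℝ h (x η) := by
  have hderiv : HasDerivAt (fun t => fderiv ℝ Φ (x t) - t • fderiv ℝ h (x t))
      (fderiv ℝ (fderiv ℝ Φ) (x η) v
        - (η • fderiv ℝ (fderiv ℝ h) (x η) v + (1 : ℝ) • fderiv ℝ h (x η))) η :=
    (hΦ₂.hasFDerivAt.comp_hasDerivAt η hx).sub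
      ((hasDerivAt_id η).smul (hh₂.hasFDerivAt.comp_hasDerivAt η hx))
  have hzero := hderiv.unique ((hasDerivAt_const η _).congr_of_eventuallyEq hcrit)
  rw [sub_apply, smul_apply]
  linear_combination (norm := module) hzero

lemma fderiv_apply_deriv_nonneg {x : ℝ → E} {η : ℝ} {v : E} (hx : HasDerivAt x v η)
    (hΦ₂ : DifferentiableAt ℝ (fderiv ℝ Φ) (x η)) (hh₂ : DifferentiableAt ℝ (fderiv ℝ h) (x η))
    (hcrit : ∀ᶠ t in 𝓝 η, fderiv ℝ Φ (x t) - t • fderiv ℝ h (x t) = 0)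
    (hpd : ∀ w ≠ 0, 0 < (fderiv ℝ (fderiv ℝ Φ) (x η) - η • fderiv ℝ (fderiv ℝ h) (x η)) w w) :
    0 ≤ fderiv ℝ h (x η) v := by
  rcases eq_or_ne v 0 with rfl | hv
  · simp
  · rw [← hessian_apply_deriv_eq_fderiv hx hΦ₂ hh₂ hcrit]
    exact (hpd v hv).le

end

/-- **Monotonicity of the capacity profile along a nondegenerate branch.**
Let `Φ, h : ℝ^m → ℝ` be twice continuously differentiable, set
`F(x, η) = Φ(x) − η·h(x)`, and let `x* : U → ℝ^m` be a continuously
differentiable map on an open interval `U = (a, b)` with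
`∇ₓF(x*(η), η) = 0` and `H(η) := ∇ₓ²F(x*(η), η)` positive definite for
every `η ∈ U`. Then `η ↦ h(x*(η))` is nondecreasing on `U`. -/
theorem capacity_profile_monotone {m : ℕ}
    (Φ h : (Fin m → ℝ) → ℝ)
    (hΦ : ContDiff ℝ 2 Φ) (hh : ContDiff ℝ 2 h)
    (a b : ℝ)
    (xs : ℝ → (Fin m → ℝ))
    (hxs : ContDiffOn ℝ 1 xs (Set.Ioo a b))
    (hcrit : ∀ η ∈ Set.Ioo a b,
      fderiv ℝ (fun z => Φ z - η * h z) (xs η) = 0)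
    (hpd : ∀ η ∈ Set.Ioo a b, ∀ v : Fin m → ℝ, v ≠ 0 →
      0 < fderiv ℝ (fun y => fderiv ℝ (fun z => Φ z - η * h z) y) (xs η) v v) :
    ∀ η₁ ∈ Set.Ioo a b, ∀ η₂ ∈ Set.Ioo a b,
      η₁ ≤ η₂ → h (xs η₁) ≤ h (xs η₂) := by
  have hΦ₁ : Differentiable ℝ Φ := hΦ.differentiable two_ne_zero
  have hh₁ : Differentiable ℝ h := hh.differentiable two_ne_zero
  have hΦ₂ : Differentiable ℝ (fderiv ℝ Φ) := (hΦ.fderiv_right le_rfl).differentiable one_ne_zero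
  have hh₂ : Differentiable ℝ (fderiv ℝ h) := (hh.fderiv_right le_rfl).differentiable one_ne_zero
  have hxs' : ∀ η ∈ Set.Ioo a b, HasDerivAt xs (deriv xs η) η := fun η hη =>
    ((hxs.differentiableOn one_ne_zero).differentiableAt (isOpen_Ioo.mem_nhds hη)).hasDerivAt
  have hcrit' : ∀ η ∈ Set.Ioo a b, ∀ᶠ t in 𝓝 η, fderiv ℝ Φ (xs t) - t • fderiv ℝ h (xs t) = 0 :=
    fun η hη => eventually_of_mem (isOpen_Ioo.mem_nhds hη) fun t ht =>
      fderiv_sub_const_mul (hΦ₁ _) (hh₁ _) t ▸ hcrit t ht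
  refine monotoneOn_of_hasDerivAt_nonneg (convex_Ioo a b) isOpen_Ioo
    (fun η hη => (hh₁ (xs η)).hasFDerivAt.comp_hasDerivAt η (hxs' η hη)) fun η hη => ?_
  refine fderiv_apply_deriv_nonneg (hxs' η hη) (hΦ₂ _) (hh₂ _) (hcrit' η hη) fun w hw => ?_
  rw [← fderiv_fderiv_sub_const_mul hΦ₁ hh₁ (hΦ₂ _) (hh₂ _)]
  exact hpd η hη w hw
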